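/- For every k > 2, the layered bisplitter C_k has exactly two end structures, namely S_0 = { [0^k, ℓ] : 1 ≤ ℓ ≤ 2^k } ∪ { ⟨0^k, w⟩ : w ∈ {a,b}*, |w| ≤ ⌈log₂((k−1)/2)⌉ } and the analogously defined set S_1 for the bit string 1·0^{k−1}. -/
import Mathlib


/-! ## Labeled transition systems with initial partition, partitions, refinement -/

structure LTS (S A : Type) where
  tr : S → A → S → Prop
  init : Finset (Finset S)

def inSameBlock {S : Type} (π : Finset (Finset S)) (s t : S) : Prop :=
  ∃ B ∈ π, s ∈ B ∧ t ∈ B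

def IsBlockPartition {S : Type} (π : Finset (Finset S)) : Prop :=
  ∅ ∉ π ∧ (∀ B ∈ π, ∀ B' ∈ π, B ≠ B' → Disjoint B B') ∧ ∀ s : S, ∃ B ∈ π, s ∈ B

def RefinesPart {S : Type} (π' π : Finset (Finset S)) : Prop :=
  ∀ B' ∈ π', ∃ B ∈ π, B' ⊆ B

def ReachesSet {S A : Type} (L : LTS S A) (s : S) (a : A) (U : Finset S) : Prop :=
  ∃ t ∈ U, L.tr s a t

def StableUnderBlock {S A : Type} (L : LTS S A) (V U : Finset S) : Prop :=
  ∀ a : A, (∀ s ∈ V, ReachesSet L s a U) ∨ (∀ s ∈ V, ¬ ReachesSet L s a U)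

def IsStablePartition {S A : Type} (L : LTS S A) (π : Finset (Finset S)) : Prop :=
  ∀ B ∈ π, ∀ C ∈ π, StableUnderBlock L B C

def SplitWitness {S A : Type} (L : LTS S A) (π : Finset (Finset S)) (s t : S) : Prop :=
  ∃ a s', L.tr s a s' ∧ ∀ t', L.tr t a t' → ¬ inSameBlock π s' t'

def ValidRefinement {S A : Type} (L : LTS S A) (π π' : Finset (Finset S)) : Prop :=
  RefinesPart π' π ∧ π' ≠ π ∧
  ∀ s t : S, ¬ inSameBlock π' s t →
    (¬ inSameBlock π s t ∨ SplitWitness L π s t ∨ SplitWitness L π t s)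

def ValidRefinementSeq {S A : Type} (L : LTS S A) (n : ℕ)
    (seq : ℕ → Finset (Finset S)) : Prop :=
  seq 0 = L.init ∧ (∀ i ≤ n, IsBlockPartition (seq i)) ∧
  (∀ i < n, ValidRefinement L (seq i) (seq (i + 1))) ∧
  IsStablePartition L (seq n)

/-! ## Refinement costs -/

def IRCstep {S : Type} [DecidableEq S] (π π' : Finset (Finset S)) : ℕ :=
  ∑ B ∈ π, (B.card - (π'.filter fun B' => B' ⊆ B).sup Finset.card)

def IRCseq {S : Type} [DecidableEq S] (n : ℕ) (seq : ℕ → Finset (Finset S)) : ℕ :=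
  ∑ i ∈ Finset.range n, IRCstep (seq i) (seq (i + 1))

noncomputable def IRC {S A : Type} [DecidableEq S] (L : LTS S A) : ℕ :=
  sInf {c | ∃ n seq, ValidRefinementSeq L n seq ∧ IRCseq n seq = c}

noncomputable def PIRC {S A : Type} (L : LTS S A) : ℕ :=
  sInf {n | ∃ seq, ValidRefinementSeq L n seq}

/-! ## Bisimulation, end structures, paths -/

def IsBisimulation {S A : Type} (L : LTS S A) (R : S → S → Prop) : Prop :=
  Symmetric R ∧ (∀ s t, R s t → inSameBlock L.init s t) ∧
  ∀ s t a s', R s t → L.tr s a s' → ∃ t', L.tr t a t' ∧ R s' t'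

def Bisimilar {S A : Type} (L : LTS S A) (s t : S) : Prop :=
  ∃ R, IsBisimulation L R ∧ R s t

def TransClosed {S A : Type} (L : LTS S A) (U : Set S) : Prop :=
  ∀ s ∈ U, ∀ a t, L.tr s a t → t ∈ U

def EndStructure {S A : Type} (L : LTS S A) (U : Set S) : Prop :=
  U.Nonempty ∧ TransClosed L U ∧
  ∀ V : Set S, TransClosed L V → (U ∩ V).Nonempty → U ⊆ V

def PathTo {S A : Type} (L : LTS S A) : List A → S → S → Prop
  | [], s, t => s = t
  | a :: w, s, t => ∃ u, L.tr s a u ∧ PathTo L w u t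

/-! ## The bisplitter B_k -/

def bsStep {k : ℕ} (σ : Fin k → Bool) (j : Fin (k - 1)) : Fin k → Bool :=
  if σ ⟨j.val + 1, by have := j.isLt; omega⟩ = false then σ
  else fun p => if p.val < j.val then σ p else if p.val = j.val then !(σ p) else false

def prefixBlock (k : ℕ) (p : List Bool) : Finset (Fin k → Bool) :=
  Finset.univ.filter fun σ => p <+: List.ofFn σ

def bisplitter (k : ℕ) : LTS (Fin k → Bool) (Fin (k - 1)) where
  tr := fun s a t => t = bsStep s a
  init := {prefixBlock k [false], prefixBlock k [true]}

def zeroState (k : ℕ) : Fin k → Bool := fun _ => false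

def oneState (k : ℕ) : Fin k → Bool := fun i => decide (i.val = 0)

/-- The bisplitter with the initial partition updated by the end structure oracle. -/
def bisplitter' (k : ℕ) : LTS (Fin k → Bool) (Fin (k - 1)) where
  tr := (bisplitter k).tr
  init := { {zeroState k}, prefixBlock k [false] \ {zeroState k},
            {oneState k}, prefixBlock k [true] \ {oneState k} }

/-! ## The layered bisplitter C_k -/

def treeHeight (k : ℕ) : ℕ := Nat.clog 2 (k / 2)

abbrev TreeWord (h : ℕ) := Σ i : Fin (h + 1), Fin i.val → Bool

abbrev CState (k : ℕ) :=
  ((Fin k → Bool) × Fin (2 ^ k)) ⊕ ((Fin k → Bool) × TreeWord (treeHeight k))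

instance instCStateDecEq (k : ℕ) : DecidableEq (CState k) := inferInstance

instance instCStateFintype (k : ℕ) : Fintype (CState k) := inferInstance

def rootWord (k : ℕ) : TreeWord (treeHeight k) := ⟨⟨0, Nat.succ_pos _⟩, Fin.elim0⟩

def binVal (w : List Bool) : ℕ := w.foldl (fun acc b => 2 * acc + b.toNat) 0

/-- The a_j-successor in B_k for j = lbl(v) = min(bin(v)+1, k-1) (1-based),
    i.e. 0-based index min(bin(v), k-2). -/
def bkSucc (k : ℕ) (σ : Fin k → Bool) (v : List Bool) : Fin k → Bool :=
  if h : min (binVal v) (k - 2) < k - 1 then bsStep σ ⟨min (binVal v) (k - 2), h⟩ else σ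

def cTr (k : ℕ) (s : CState k) (α : Bool) (t : CState k) : Prop :=
  match s with
  | Sum.inl (σ, ℓ) =>
      if h : ℓ.val + 1 < 2 ^ k then t = Sum.inl (σ, ⟨ℓ.val + 1, h⟩)
      else t = Sum.inr (σ, rootWord k)
  | Sum.inr (σ, w) =>
      if h : w.1.val < treeHeight k then
        t = Sum.inr (σ, ⟨⟨w.1.val + 1, by omega⟩, Fin.snoc w.2 α⟩)
      else t = Sum.inl (bkSucc k σ (List.ofFn w.2 ++ [α]), ⟨0, by positivity⟩)

def firstBit {k : ℕ} (σ : Fin k → Bool) : Bool :=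
  if h : 0 < k then σ ⟨0, h⟩ else false

def stakeBlock (k : ℕ) (ℓ : Fin (2 ^ k)) (b : Bool) : Finset (CState k) :=
  Finset.univ.filter fun s => ∃ σ : Fin k → Bool, firstBit σ = b ∧ s = Sum.inl (σ, ℓ)

def treeBlock (k : ℕ) : Finset (CState k) :=
  Finset.univ.filter fun s => s.isRight = true

def cInit (k : ℕ) : Finset (Finset (CState k)) :=
  (Finset.univ.image fun p : Fin (2 ^ k) × Bool => stakeBlock k p.1 p.2) ∪ {treeBlock k}

def layered (k : ℕ) : LTS (CState k) Bool := ⟨cTr k, cInit k⟩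

/-- The stake index of level 1. -/
def firstLevel (k : ℕ) : Fin (2 ^ k) := ⟨0, by positivity⟩

/-- The stake index of level 2^k. -/
def lastLevel (k : ℕ) : Fin (2 ^ k) :=
  ⟨2 ^ k - 1, Nat.sub_lt (by positivity) one_pos⟩

def mkWord {h : ℕ} (w : List Bool) (hw : w.length ≤ h) : TreeWord h :=
  ⟨⟨w.length, Nat.lt_succ_of_le hw⟩, fun j => w.get j⟩

def endSet (k : ℕ) (σ₀ : Fin k → Bool) : Set (CState k) :=
  {s | (∃ ℓ, s = Sum.inl (σ₀, ℓ)) ∨ ∃ w, s = Sum.inr (σ₀, w)}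

/-! ## End structure partition -/

noncomputable def bisimClass {S A : Type} [Fintype S] (L : LTS S A) (s : S) : Finset S :=
  (Set.toFinite {t | Bisimilar L s t}).toFinset

def ESUnion {S A : Type} (L : LTS S A) : Set S := ⋃₀ {U | EndStructure L U}

noncomputable def esPartition {S A : Type} [Fintype S] [DecidableEq S] (L : LTS S A) :
    Finset (Finset S) :=
  ((Set.toFinite {B : Finset S | ∃ s ∈ ESUnion L, B = bisimClass L s}).toFinset ∪
      L.init.image fun B =>
        B \ (Set.toFinite {t | ∃ s ∈ ESUnion L, Bisimilar L s t}).toFinset) \ {∅}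

/-! ## The sequential splitter D_n (states 0,…,n-1 standing for 1,…,n) -/

def seqSplitter (n : ℕ) : LTS (Fin n) Unit where
  tr := fun s _ t => if h : s.val + 1 < n then t = ⟨s.val + 1, h⟩ else t = s
  init := {Finset.univ.filter fun s => s.val + 1 < n,
           Finset.univ.filter fun s => s.val + 1 = n}

def dPart (n i : ℕ) : Finset (Finset (Fin n)) :=
  {Finset.univ.filter fun s => s.val + i < n} ∪
    (Finset.univ.filter fun s : Fin n => n ≤ s.val + i).image fun s => {s}

/-! ## The fast parallel example G_k -/

def gLTS (k : ℕ) : LTS (Fin (2 ^ k) ⊕ Fin k) Unit where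
  tr := fun s _ t => ∃ (i : Fin (2 ^ k)) (j : Fin k),
    s = Sum.inl i ∧ t = Sum.inr j ∧ Nat.testBit i.val j.val = true
  init := {Finset.univ.filter fun s => s.isLeft = true} ∪
    Finset.univ.image fun j : Fin k => ({Sum.inr j} : Finset (Fin (2 ^ k) ⊕ Fin k))

/-! ### Auxiliary machinery for Statement 15 -/

open Relation

def cstep (k : ℕ) (s t : CState k) : Prop := ∃ α, cTr k s α t

lemma closed_reach {k : ℕ} {U : Set (CState k)} (hU : TransClosed (layered k) U)
    {s t : CState k} (h : ReflTransGen (cstep k) s t) (hs : s ∈ U) : t ∈ U := by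
  induction h with
  | refl => exact hs
  | tail _ hst ih => obtain ⟨α, hα⟩ := hst; exact hU _ ih α _ hα

lemma cstep_stake {k : ℕ} {σ : Fin k → Bool} {ℓ : Fin (2 ^ k)} (h : ℓ.val + 1 < 2 ^ k) :
    cstep k (Sum.inl (σ, ℓ)) (Sum.inl (σ, ⟨ℓ.val + 1, h⟩)) :=
  ⟨false, by simp [cTr, h]⟩

lemma cstep_root {k : ℕ} {σ : Fin k → Bool} :
    cstep k (Sum.inl (σ, lastLevel k)) (Sum.inr (σ, rootWord k)) := by
  refine ⟨false, ?_⟩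
  have h : ¬ ((lastLevel k).val + 1 < 2 ^ k) := by
    have : 0 < 2 ^ k := by positivity
    simp only [lastLevel]; omega
  simp [cTr, h]

lemma cstep_tree {k : ℕ} {σ : Fin k → Bool} {w : TreeWord (treeHeight k)} (α : Bool)
    (h : w.1.val < treeHeight k) :
    cstep k (Sum.inr (σ, w))
      (Sum.inr (σ, ⟨⟨w.1.val + 1, by omega⟩, Fin.snoc w.2 α⟩)) :=
  ⟨α, by simp [cTr, h]⟩

lemma cstep_exit {k : ℕ} {σ : Fin k → Bool} {w : TreeWord (treeHeight k)} (α : Bool)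
    (h : ¬ w.1.val < treeHeight k) :
    cstep k (Sum.inr (σ, w))
      (Sum.inl (bkSucc k σ (List.ofFn w.2 ++ [α]), firstLevel k)) :=
  ⟨α, by simp [cTr, h, firstLevel]⟩

lemma reach_climb {k : ℕ} (σ : Fin k → Bool) :
    ∀ (m : ℕ) (hm : m < 2 ^ k) (ℓ : Fin (2 ^ k)), ℓ.val ≤ m →
      ReflTransGen (cstep k) (Sum.inl (σ, ℓ)) (Sum.inl (σ, ⟨m, hm⟩)) := by
  intro m
  induction m with
  | zero =>
    intro hm ℓ hℓ
    have : ℓ = ⟨0, hm⟩ := Fin.ext (show ℓ.val = 0 by omega)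
    rw [this]
  | succ n ih =>
    intro hm ℓ hℓ
    rcases Nat.lt_or_ge ℓ.val (n + 1) with h | h
    · have h2 : n < 2 ^ k := by omega
      exact (ih h2 ℓ (by omega)).tail (cstep_stake (ℓ := ⟨n, h2⟩) hm)
    · have : ℓ = ⟨n + 1, hm⟩ := Fin.ext (show ℓ.val = n + 1 by omega)
      rw [this]

lemma reach_tree {k : ℕ} (σ : Fin k → Bool) :
    ∀ (n : ℕ) (hn : n ≤ treeHeight k) (f : Fin n → Bool),
      ReflTransGen (cstep k) (Sum.inr (σ, rootWord k))
        (Sum.inr (σ, ⟨⟨n, by omega⟩, f⟩)) := by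
  intro n
  induction n with
  | zero =>
    intro hn f
    have hf : f = Fin.elim0 := funext fun i => i.elim0
    subst hf
    exact ReflTransGen.refl
  | succ n ih =>
    intro hn f
    have h1 : n < treeHeight k := by omega
    have := (ih (le_of_lt h1) (Fin.init f)).tail
      (cstep_tree (w := ⟨⟨n, by omega⟩, Fin.init f⟩) (f (Fin.last n)) h1)
    rwa [Fin.snoc_init_self] at this

lemma reach_fill {k : ℕ} (σ : Fin k → Bool) :
    ∀ (d n : ℕ) (h : n + d = treeHeight k) (f : Fin n → Bool),
      ∃ g : Fin (treeHeight k) → Bool,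
        ReflTransGen (cstep k) (Sum.inr (σ, ⟨⟨n, by omega⟩, f⟩))
          (Sum.inr (σ, ⟨⟨treeHeight k, lt_add_one _⟩, g⟩)) := by
  intro d
  induction d with
  | zero =>
    intro n h f
    have hn : n = treeHeight k := by omega
    subst hn
    exact ⟨f, ReflTransGen.refl⟩
  | succ d ih =>
    intro n h f
    obtain ⟨g, hg⟩ := ih (n + 1) (by omega) (Fin.snoc f false)
    exact ⟨g, ReflTransGen.head
      (cstep_tree (w := ⟨⟨n, by omega⟩, f⟩) false (by simpa using by omega : n < treeHeight k)) hg⟩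

lemma reach_exit_tree {k : ℕ} (σ : Fin k → Bool) (w : TreeWord (treeHeight k)) :
    ∃ v : List Bool, ReflTransGen (cstep k) (Sum.inr (σ, w))
      (Sum.inl (bkSucc k σ v, firstLevel k)) := by
  obtain ⟨⟨n, hn⟩, f⟩ := w
  obtain ⟨g, hg⟩ := reach_fill σ (treeHeight k - n) n (by omega) f
  exact ⟨List.ofFn g ++ [false],
    hg.tail (cstep_exit (w := ⟨⟨treeHeight k, lt_add_one _⟩, g⟩) false (lt_irrefl _))⟩

lemma reach_exit_stake {k : ℕ} (σ : Fin k → Bool) (ℓ : Fin (2 ^ k)) :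
    ∃ v : List Bool, ReflTransGen (cstep k) (Sum.inl (σ, ℓ))
      (Sum.inl (bkSucc k σ v, firstLevel k)) := by
  have h1 : ReflTransGen (cstep k) (Sum.inl (σ, ℓ)) (Sum.inl (σ, lastLevel k)) := by
    have hpos : 0 < 2 ^ k := by positivity
    have := reach_climb σ (2 ^ k - 1) (by omega) ℓ (by have := ℓ.isLt; omega)
    simpa [lastLevel] using this
  obtain ⟨v, hv⟩ := reach_exit_tree σ (rootWord k)
  exact ⟨v, (h1.tail cstep_root).trans hv⟩

lemma reach_first {k : ℕ} (s : CState k) :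
    ∃ σ : Fin k → Bool, ReflTransGen (cstep k) s (Sum.inl (σ, firstLevel k)) := by
  rcases s with ⟨σ, ℓ⟩ | ⟨σ, w⟩
  · obtain ⟨v, hv⟩ := reach_exit_stake σ ℓ
    exact ⟨_, hv⟩
  · obtain ⟨v, hv⟩ := reach_exit_tree σ w
    exact ⟨_, hv⟩

/-! Words realizing any binary value -/

def natWord : ℕ → ℕ → List Bool
  | 0, _ => []
  | n + 1, m => natWord n (m / 2) ++ [decide (m % 2 = 1)]

lemma natWord_length : ∀ n m, (natWord n m).length = n := by
  intro n
  induction n with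
  | zero => intro m; simp [natWord]
  | succ n ih => intro m; simp [natWord, ih]

lemma binVal_append (l : List Bool) (b : Bool) :
    binVal (l ++ [b]) = 2 * binVal l + b.toNat := by
  simp [binVal, List.foldl_append]

lemma two_pow_mod_succ (n m : ℕ) : m % 2 ^ (n + 1) = 2 * (m / 2 % 2 ^ n) + m % 2 := by
  have e1 : m = 2 ^ (n + 1) * (m / 2 / 2 ^ n) + (2 * (m / 2 % 2 ^ n) + m % 2) := by
    calc m = 2 * (m / 2) + m % 2 := by omega
    _ = 2 * (2 ^ n * (m / 2 / 2 ^ n) + m / 2 % 2 ^ n) + m % 2 := by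
        rw [Nat.div_add_mod (m / 2) (2 ^ n)]
    _ = 2 ^ (n + 1) * (m / 2 / 2 ^ n) + (2 * (m / 2 % 2 ^ n) + m % 2) := by ring
  have hr : m / 2 % 2 ^ n < 2 ^ n := Nat.mod_lt _ (by positivity)
  have hlt : 2 * (m / 2 % 2 ^ n) + m % 2 < 2 ^ (n + 1) := by
    have : (2 : ℕ) ^ (n + 1) = 2 * 2 ^ n := by ring
    omega
  conv_lhs => rw [e1]
  rw [Nat.mul_add_mod]
  exact Nat.mod_eq_of_lt hlt

lemma binVal_natWord : ∀ n m, binVal (natWord n m) = m % 2 ^ n := by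
  intro n
  induction n with
  | zero => intro m; simp [natWord, binVal, Nat.mod_one]
  | succ n ih =>
    intro m
    rw [natWord, binVal_append, ih, two_pow_mod_succ]
    have : (decide (m % 2 = 1)).toNat = m % 2 := by
      rcases Nat.mod_two_eq_zero_or_one m with h | h <;> simp [h]
    omega

lemma ofFn_get_cast {α : Type} {n : ℕ} (l : List α) (h' : l.length = n) :
    List.ofFn (fun i : Fin n => l.get (Fin.cast h'.symm i)) = l := by
  subst h'
  exact List.ofFn_get l

lemma treeHeight_bound {k : ℕ} (hk : 2 < k) : k - 1 ≤ 2 ^ (treeHeight k + 1) := by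
  have h1 : k / 2 ≤ 2 ^ treeHeight k := Nat.le_pow_clog one_lt_two (k / 2)
  have h2 : (2 : ℕ) ^ (treeHeight k + 1) = 2 * 2 ^ treeHeight k := by ring
  omega

lemma reach_bsStep {k : ℕ} (hk : 2 < k) (σ : Fin k → Bool) (j : Fin (k - 1)) :
    ReflTransGen (cstep k) (Sum.inl (σ, firstLevel k))
      (Sum.inl (bsStep σ j, firstLevel k)) := by
  have hjk : j.val < k - 1 := j.isLt
  have hbd := treeHeight_bound hk
  set h := treeHeight k with hh
  have hj2 : j.val / 2 < 2 ^ h := by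
    have h2 : (2 : ℕ) ^ (h + 1) = 2 * 2 ^ h := by ring
    omega
  set v' : List Bool := natWord h (j.val / 2) with hv'
  set α : Bool := decide (j.val % 2 = 1) with hα
  have hlen : v'.length = h := natWord_length h _
  set g : Fin h → Bool := fun i => v'.get (Fin.cast hlen.symm i) with hg
  have hofn : List.ofFn g = v' := ofFn_get_cast v' hlen
  have hbv : binVal (List.ofFn g ++ [α]) = j.val := by
    rw [hofn, binVal_append, hv', binVal_natWord]
    have : α.toNat = j.val % 2 := by
      rcases Nat.mod_two_eq_zero_or_one j.val with h | h <;> simp [hα, h]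
    rw [Nat.mod_eq_of_lt hj2]
    omega
  have hsucc : bkSucc k σ (List.ofFn g ++ [α]) = bsStep σ j := by
    rw [bkSucc, hbv]
    have hmin : min j.val (k - 2) = j.val := by omega
    rw [hmin, dif_pos hjk]
  -- climb to last level, go to root, build the word, exit
  have h1 : ReflTransGen (cstep k) (Sum.inl (σ, firstLevel k)) (Sum.inl (σ, lastLevel k)) := by
    have hpos : 0 < 2 ^ k := by positivity
    have := reach_climb σ (2 ^ k - 1) (by omega) (firstLevel k) (by simp [firstLevel])
    simpa [lastLevel] using this
  have h2 : ReflTransGen (cstep k) (Sum.inr (σ, rootWord k))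
      (Sum.inr (σ, ⟨⟨h, by omega⟩, g⟩)) := reach_tree σ h le_rfl g
  have h3 := (h1.tail cstep_root).trans h2
  have h4 := h3.tail (cstep_exit (w := ⟨⟨h, by omega⟩, g⟩) α (lt_irrefl _))
  rwa [hsucc] at h4

lemma bsStep_zero {k : ℕ} (j : Fin (k - 1)) : bsStep (zeroState k) j = zeroState k := by
  simp [bsStep, zeroState]

lemma bsStep_one {k : ℕ} (j : Fin (k - 1)) : bsStep (oneState k) j = oneState k := by
  have hc : oneState k ⟨j.val + 1, by have := j.isLt; omega⟩ = false := by
    simp [oneState]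
  simp [bsStep, hc]

lemma bkSucc_fix {k : ℕ} (σ₀ : Fin k → Bool) (hfix : ∀ j, bsStep σ₀ j = σ₀)
    (v : List Bool) : bkSucc k σ₀ v = σ₀ := by
  rw [bkSucc]
  split
  · exact hfix _
  · rfl

/-! Convergence to `zeroState` or `oneState` -/

lemma conv_reach {k : ℕ} (hk : 2 < k) :
    ∀ (n : ℕ) (σ : Fin k → Bool), (∀ i : Fin k, 1 ≤ i.val → σ i = true → i.val ≤ n) →
      ∃ σ₀, (σ₀ = zeroState k ∨ σ₀ = oneState k) ∧
        ReflTransGen (cstep k) (Sum.inl (σ, firstLevel k)) (Sum.inl (σ₀, firstLevel k)) := by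
  intro n
  induction n with
  | zero =>
    intro σ hσ
    refine ⟨σ, ?_, ReflTransGen.refl⟩
    have hz : ∀ i : Fin k, 1 ≤ i.val → σ i = false := by
      intro i hi
      rcases Bool.eq_false_or_eq_true (σ i) with h | h
      · have := hσ i hi h; omega
      · exact h
    by_cases hb : σ ⟨0, by omega⟩ = true
    · right
      funext i
      by_cases h0 : i.val = 0
      · have : i = ⟨0, by omega⟩ := Fin.ext h0
        rw [this, hb]; simp [oneState]
      · rw [hz i (by omega)]; simp [oneState, h0]
    · left
      funext i
      by_cases h0 : i.val = 0
      · have : i = ⟨0, by omega⟩ := Fin.ext h0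
        rw [this]
        simpa [zeroState] using hb
      · rw [hz i (by omega)]; simp [zeroState]
  | succ n ih =>
    intro σ hσ
    by_cases hall : ∀ i : Fin k, 1 ≤ i.val → σ i = true → i.val ≤ n
    · exact ih σ hall
    · push_neg at hall
      obtain ⟨i, hi1, hi2, hi3⟩ := hall
      have hieq : i.val = n + 1 := by have := hσ i hi1 hi2; omega
      have hjk : n < k - 1 := by have := i.isLt; omega
      set j : Fin (k - 1) := ⟨n, hjk⟩ with hj
      have hcond : σ ⟨j.val + 1, by have := j.isLt; omega⟩ = true := by
        have : (⟨j.val + 1, by have := j.isLt; omega⟩ : Fin k) = i := Fin.ext (by simp [hj, hieq])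
        rw [this]; exact hi2
      have hne : ¬ (σ ⟨j.val + 1, by have := j.isLt; omega⟩ = false) := by
        rw [hcond]; simp
      have hstep : bsStep σ j = fun p : Fin k =>
          if p.val < j.val then σ p else if p.val = j.val then !(σ p) else false := by
        rw [bsStep, if_neg hne]
      have hbound : ∀ p : Fin k, 1 ≤ p.val → bsStep σ j p = true → p.val ≤ n := by
        intro p hp1 hp2
        rw [hstep] at hp2
        simp only at hp2
        by_cases h1 : p.val < j.val
        · simp [hj] at h1 ⊢; omega
        · by_cases h2 : p.val = j.val
          · simp [hj] at h2 ⊢; omega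
          · rw [if_neg h1, if_neg h2] at hp2; simp at hp2
      obtain ⟨σ₀, hσ₀, hr⟩ := ih (bsStep σ j) hbound
      exact ⟨σ₀, hσ₀, (reach_bsStep hk σ j).trans hr⟩

/-! End structure facts about `endSet` -/

lemma mem_endSet_stake {k : ℕ} (σ₀ : Fin k → Bool) (ℓ : Fin (2 ^ k)) :
    (Sum.inl (σ₀, ℓ) : CState k) ∈ endSet k σ₀ := Or.inl ⟨ℓ, rfl⟩

lemma endSet_closed {k : ℕ} (σ₀ : Fin k → Bool) (hfix : ∀ j, bsStep σ₀ j = σ₀) :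
    TransClosed (layered k) (endSet k σ₀) := by
  rintro s hs a t ht
  have ht' : cTr k s a t := ht
  rcases hs with ⟨ℓ, rfl⟩ | ⟨w, rfl⟩
  · simp only [cTr] at ht'
    split at ht'
    · exact Or.inl ⟨_, ht'⟩
    · exact Or.inr ⟨_, ht'⟩
  · simp only [cTr] at ht'
    split at ht'
    · exact Or.inr ⟨_, ht'⟩
    · rw [bkSucc_fix σ₀ hfix] at ht'
      exact Or.inl ⟨_, ht'⟩

lemma endSet_reach_from_base {k : ℕ} (σ₀ : Fin k → Bool) :
    ∀ s ∈ endSet k σ₀, ReflTransGen (cstep k) (Sum.inl (σ₀, firstLevel k)) s := by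
  rintro s (⟨ℓ, rfl⟩ | ⟨w, rfl⟩)
  · exact reach_climb σ₀ ℓ.val ℓ.isLt (firstLevel k) (by simp [firstLevel])
  · have h1 : ReflTransGen (cstep k) (Sum.inl (σ₀, firstLevel k))
        (Sum.inl (σ₀, lastLevel k)) := by
      have hpos : 0 < 2 ^ k := by positivity
      have := reach_climb σ₀ (2 ^ k - 1) (by omega) (firstLevel k) (by simp [firstLevel])
      simpa [lastLevel] using this
    obtain ⟨⟨n, hn⟩, f⟩ := w
    have h2 := reach_tree σ₀ n (by omega) f
    exact (h1.tail cstep_root).trans h2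

lemma endSet_reach_to_base {k : ℕ} (σ₀ : Fin k → Bool) (hfix : ∀ j, bsStep σ₀ j = σ₀) :
    ∀ s ∈ endSet k σ₀, ReflTransGen (cstep k) s (Sum.inl (σ₀, firstLevel k)) := by
  rintro s (⟨ℓ, rfl⟩ | ⟨w, rfl⟩)
  · obtain ⟨v, hv⟩ := reach_exit_stake σ₀ ℓ
    rwa [bkSucc_fix σ₀ hfix] at hv
  · obtain ⟨v, hv⟩ := reach_exit_tree σ₀ w
    rwa [bkSucc_fix σ₀ hfix] at hv

lemma endSet_end {k : ℕ} (σ₀ : Fin k → Bool) (hfix : ∀ j, bsStep σ₀ j = σ₀) :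
    EndStructure (layered k) (endSet k σ₀) := by
  refine ⟨⟨Sum.inl (σ₀, firstLevel k), mem_endSet_stake σ₀ _⟩, endSet_closed σ₀ hfix, ?_⟩
  intro V hV ⟨x, hxU, hxV⟩ y hy
  have h1 : (Sum.inl (σ₀, firstLevel k) : CState k) ∈ V :=
    closed_reach hV (endSet_reach_to_base σ₀ hfix x hxU) hxV
  exact closed_reach hV (endSet_reach_from_base σ₀ y hy) h1

/-- For k > 2, the layered bisplitter `C_k` has exactly two end structures,
namely the stake-and-tree sets of `0^k` and of `1·0^(k-1)`. -/
theorem layered_bisplitter_end_structures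
    (k : ℕ) (hk : 2 < k) :
    ∀ U : Set (CState k),
      EndStructure (layered k) U ↔
        U = endSet k (zeroState k) ∨ U = endSet k (oneState k) := by
  intro U
  constructor
  · rintro ⟨⟨s, hs⟩, hcl, hmin⟩
    obtain ⟨σ, hσ⟩ := reach_first s
    obtain ⟨σ₀, hσ₀, hr⟩ := conv_reach hk k σ (fun i _ _ => le_of_lt i.isLt)
    have hbase : (Sum.inl (σ₀, firstLevel k) : CState k) ∈ U :=
      closed_reach hcl (hσ.trans hr) hs
    have hfix : ∀ j, bsStep σ₀ j = σ₀ := by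
      rcases hσ₀ with rfl | rfl
      · exact bsStep_zero
      · exact bsStep_one
    have h1 : U ⊆ endSet k σ₀ :=
      hmin _ (endSet_closed σ₀ hfix) ⟨_, hbase, mem_endSet_stake σ₀ (firstLevel k)⟩
    have h2 : endSet k σ₀ ⊆ U :=
      (endSet_end σ₀ hfix).2.2 U hcl ⟨_, mem_endSet_stake σ₀ (firstLevel k), hbase⟩
    rcases hσ₀ with rfl | rfl
    · exact Or.inl (subset_antisymm h1 h2)
    · exact Or.inr (subset_antisymm h1 h2)
  · rintro (rfl | rfl)
    · exact endSet_end _ bsStep_zero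
    · exact endSet_end _ bsStep_one
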